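/- A bipartite graph with biadjacency matrix H given by circulant blocks x^{e_{s,l}} (s-th block row, l-th block column) contains a 4-cycle if and only if there exist block rows s ≠ s' and block columns l ≠ l' with e_{s,l} − e_{s',l} = e_{s,l'} − e_{s',l'} in ℤ/N. -/
import Mathlib

def tanner {α β : Type*} (H : α → β → ℕ) : SimpleGraph (α ⊕ β) :=
  SimpleGraph.fromRel (fun u v => ∃ i j, u = Sum.inl i ∧ v = Sum.inr j ∧ H i j = 1)

def hasFourCycle {V : Type*} (G : SimpleGraph V) : Prop :=
  ∃ (v : V) (w : G.Walk v v), w.IsCycle ∧ w.length = 4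

open SimpleGraph Walk in
lemma hasFourCycle_iff {V : Type*} (G : SimpleGraph V) :
    hasFourCycle G ↔ ∃ a b c d : V, a ≠ c ∧ b ≠ d ∧
      G.Adj a b ∧ G.Adj b c ∧ G.Adj c d ∧ G.Adj d a := by
  constructor
  · rintro ⟨v, w, hc, hl⟩
    cases w with
    | nil => simp at hl
    | cons h1 w =>
      cases w with
      | nil => simp at hl
      | cons h2 w =>
        cases w with
        | nil => simp at hl
        | cons h3 w =>
          cases w with
          | nil => simp at hl
          | cons h4 w =>
            cases w with
            | cons h5 w => simp [Walk.length_cons] at hl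
            | nil =>
              simp [Walk.isCycle_def, Walk.support, List.nodup_cons] at hc
              exact ⟨v, _, _, _, fun h => hc.2.2.1.2 h.symm, hc.2.1.2.1, h1, h2, h3, h4⟩
  · rintro ⟨a, b, c, d, hac, hbd, hab, hbc, hcd, hda⟩
    refine ⟨a, .cons hab (.cons hbc (.cons hcd (.cons hda .nil))), ?_, rfl⟩
    have n1 := hab.ne; have n2 := hbc.ne; have n3 := hcd.ne; have n4 := hda.ne
    simp only [Walk.isCycle_def, Walk.isTrail_def, Walk.support_cons, Walk.support_nil,
      Walk.edges_cons, Walk.edges_nil, List.nodup_cons, List.tail, List.mem_cons,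
      List.not_mem_nil, List.nodup_nil, Sym2.eq, Sym2.rel_iff', Prod.mk.injEq, Prod.swap_prod_mk,
      or_false, not_or, and_true]
    tauto

open SimpleGraph in
lemma tanner_adj {α β : Type*} (H : α → β → ℕ) {u v : α ⊕ β} (h : (tanner H).Adj u v) :
    (∃ i j, u = Sum.inl i ∧ v = Sum.inr j ∧ H i j = 1) ∨
    (∃ i j, v = Sum.inl i ∧ u = Sum.inr j ∧ H i j = 1) := by
  rw [tanner, SimpleGraph.fromRel_adj] at h
  exact h.2

open SimpleGraph in
lemma tanner_key {α β : Type*} (H : α → β → ℕ) (p0 : α) (u2 u3 u4 : α ⊕ β)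
    (h13 : Sum.inl p0 ≠ u3) (h24 : u2 ≠ u4)
    (a12 : (tanner H).Adj (Sum.inl p0) u2) (a23 : (tanner H).Adj u2 u3)
    (a34 : (tanner H).Adj u3 u4) (a41 : (tanner H).Adj u4 (Sum.inl p0)) :
    ∃ p1 p2 q1 q2, p1 ≠ p2 ∧ q1 ≠ q2 ∧
      H p1 q1 = 1 ∧ H p2 q1 = 1 ∧ H p2 q2 = 1 ∧ H p1 q2 = 1 := by
  rcases tanner_adj H a12 with ⟨i, q1, hi, rfl, e1⟩ | ⟨i, j, hj, hi, -⟩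
  · injection hi with h; subst h
    rcases tanner_adj H a23 with ⟨i, j, h, -, -⟩ | ⟨p2, j, rfl, hj, e2⟩
    · exact absurd h (by simp)
    · injection hj with h; subst h
      rcases tanner_adj H a34 with ⟨i, q2, hi2, rfl, e3⟩ | ⟨i, j, hi2, hj2, -⟩
      · injection hi2 with h; subst h
        rcases tanner_adj H a41 with ⟨i, j, hi3, hj3, -⟩ | ⟨i, j, hi3, hj3, e4⟩
        · exact absurd hj3 (by simp)
        · injection hi3 with h; subst h
          injection hj3 with h; subst h
          exact ⟨p0, p2, q1, q2, fun h => h13 (by rw [h]), fun h => h24 (by rw [h]),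
            e1, e2, e3, e4⟩
      · exact absurd hj2 (by simp)
  · exact absurd hi (by simp)

theorem circulant_fourCycle_criterion (N n_c n_v : ℕ) [NeZero N]
    (e : Fin n_c → Fin n_v → ZMod N) :
    let H : (Fin n_c × ZMod N) → (Fin n_v × ZMod N) → ℕ :=
      fun p q => if q.2 = p.2 + e p.1 q.1 then 1 else 0
    hasFourCycle (tanner H) ↔
      ∃ s s' : Fin n_c, ∃ l l' : Fin n_v, s ≠ s' ∧ l ≠ l' ∧
        e s l - e s' l = e s l' - e s' l' := by
  intro H
  have hH : ∀ p q, H p q = 1 ↔ q.2 = p.2 + e p.1 q.1 := by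
    intro p q
    simp only [H]
    split <;> simp_all
  rw [hasFourCycle_iff]
  constructor
  · rintro ⟨u1, u2, u3, u4, h13, h24, a12, a23, a34, a41⟩
    have key : ∃ p1 p2 q1 q2, p1 ≠ p2 ∧ q1 ≠ q2 ∧
        H p1 q1 = 1 ∧ H p2 q1 = 1 ∧ H p2 q2 = 1 ∧ H p1 q2 = 1 := by
      rcases tanner_adj H a12 with ⟨p, q, rfl, -, -⟩ | ⟨p, q, rfl, rfl, -⟩
      · exact tanner_key H p u2 u3 u4 h13 h24 a12 a23 a34 a41
      · exact tanner_key H p u3 u4 (Sum.inr q) h24 (Ne.symm h13) a23 a34 a41 a12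
    obtain ⟨⟨s, i⟩, ⟨s', i'⟩, ⟨l, j⟩, ⟨l', j'⟩, hp, hq, e1, e2, e3, e4⟩ := key
    rw [hH] at e1 e2 e3 e4
    simp only at e1 e2 e3 e4
    have h1 : i + e s l = i' + e s' l := by rw [← e1, ← e2]
    have h2 : i + e s l' = i' + e s' l' := by rw [← e4, ← e3]
    refine ⟨s, s', l, l', ?_, ?_, by linear_combination h1 - h2⟩
    · rintro rfl
      have : i = i' := add_right_cancel h1
      exact hp (by simp [this])
    · rintro rfl
      have : j = j' := by rw [e1, e4]
      exact hq (by simp [this])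
  · rintro ⟨s, s', l, l', hs, hl, hrel⟩
    have adj : ∀ (p : Fin n_c × ZMod N) (q : Fin n_v × ZMod N), H p q = 1 →
        (tanner H).Adj (Sum.inl p) (Sum.inr q) := by
      intro p q h
      rw [tanner, SimpleGraph.fromRel_adj]
      exact ⟨by simp, Or.inl ⟨p, q, rfl, rfl, h⟩⟩
    refine ⟨Sum.inl (s, 0), Sum.inr (l, e s l), Sum.inl (s', e s l - e s' l),
      Sum.inr (l', e s l'), by simp [hs], by simp [hl],
      adj _ _ ((hH _ _).2 ?_), ((adj _ _ ((hH _ _).2 ?_)).symm),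
      adj _ _ ((hH _ _).2 ?_), ((adj _ _ ((hH _ _).2 ?_)).symm)⟩
    · show e s l = 0 + e s l; ring
    · show e s l = (e s l - e s' l) + e s' l; ring
    · show e s l' = (e s l - e s' l) + e s' l'; linear_combination -hrel
    · show e s l' = 0 + e s l'; ring
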